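/- arXiv:1207.3896 — 2 statements merged into one kernel-verified Lean document; each statement's English description precedes it below -/
import Mathlib

section
/- Let (X, μ) be a σ-finite measure space, let h ∈ L²(μ), and let α, β, v₊ : X → ℝ be measurable functions with α, β ∈ L²(μ) and α(x) ≤ v₊(x) ≤ β(x) for μ-almost every x. Suppose that for every measurable function v : X → ℝ with α(x) ≤ v(x) ≤ β(x) μ-almost everywhere one has ∫_X h · (v − v₊) dμ ≤ 0. Then for μ-almost every x ∈ X, h(x) · (c − v₊(x)) ≤ 0 for every real number c with α(x) ≤ c ≤ β(x). -/
open MeasureTheory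

/-- Auxiliary: testing the variational inequality with the control equal to `g` on the set
where the integrand is positive and `v₀` elsewhere shows `h * (g - v₀) ≤ 0` a.e. -/
theorem variational_inequality_localization_aux
    {X : Type*} [MeasurableSpace X] (μ : Measure X)
    (h α β v₀ : X → ℝ)
    (hh : MemLp h 2 μ)
    (hv₀_meas : Measurable v₀)
    (hv₀mem : MemLp v₀ 2 μ)
    (hv₀ : ∀ᵐ x ∂μ, α x ≤ v₀ x ∧ v₀ x ≤ β x)
    (hvar : ∀ v : X → ℝ, Measurable v → (∀ᵐ x ∂μ, α x ≤ v x ∧ v x ≤ β x) →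
      ∫ x, h x * (v x - v₀ x) ∂μ ≤ 0)
    (g : X → ℝ) (hg_meas : Measurable g) (hg : MemLp g 2 μ)
    (hg_bd : ∀ᵐ x ∂μ, α x ≤ g x ∧ g x ≤ β x) :
    ∀ᵐ x ∂μ, h x * (g x - v₀ x) ≤ 0 := by
  -- measurable representative of h
  set h' : X → ℝ := hh.1.mk h with hh'def
  have h'_meas : Measurable h' := hh.1.stronglyMeasurable_mk.measurable
  have h_ae : h =ᵐ[μ] h' := hh.1.ae_eq_mk
  -- integrability of the products
  have hgv : MemLp (fun x => g x - v₀ x) 2 μ := hg.sub hv₀mem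
  have hint : Integrable (fun x => h x * (g x - v₀ x)) μ := by
    have := (hgv.smul (r := 1) hh (hpqr := ⟨by rw [inv_one, ENNReal.inv_two_add_inv_two]⟩))
    rw [memLp_one_iff_integrable] at this
    exact this
  have hint' : Integrable (fun x => h' x * (g x - v₀ x)) μ :=
    hint.congr (h_ae.mono fun x hx => by simp [hx])
  -- the bad set
  set S : Set X := {x | 0 < h' x * (g x - v₀ x)} with hSdef
  have hS : MeasurableSet S :=
    measurableSet_lt measurable_const (h'_meas.mul (hg_meas.sub hv₀_meas))
  -- the test control
  set v : X → ℝ := fun x => if x ∈ S then g x else v₀ x with hvdef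
  have hv_meas : Measurable v := Measurable.ite hS hg_meas hv₀_meas
  have hv_bd : ∀ᵐ x ∂μ, α x ≤ v x ∧ v x ≤ β x := by
    filter_upwards [hv₀, hg_bd] with x hx hgx
    by_cases hxS : x ∈ S <;> simp [hvdef, hxS, hx, hgx]
  have key : ∫ x, h x * (v x - v₀ x) ∂μ ≤ 0 := hvar v hv_meas hv_bd
  -- rewrite as a set integral
  have hind : (fun x => h x * (v x - v₀ x)) =
      S.indicator (fun x => h x * (g x - v₀ x)) := by
    funext x
    by_cases hxS : x ∈ S <;> simp [hvdef, hxS, Set.indicator_of_mem, Set.indicator_of_notMem]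
  have key2 : ∫ x in S, h x * (g x - v₀ x) ∂μ ≤ 0 := by
    rw [← integral_indicator hS, ← hind]; exact key
  have key3 : ∫ x in S, h' x * (g x - v₀ x) ∂μ ≤ 0 := by
    have : ∫ x in S, h' x * (g x - v₀ x) ∂μ = ∫ x in S, h x * (g x - v₀ x) ∂μ :=
      integral_congr_ae ((ae_restrict_of_ae h_ae).mono fun x hx => by simp [hx])
    rw [this]; exact key2
  have hnonneg : 0 ≤ᵐ[μ.restrict S] fun x => h' x * (g x - v₀ x) := by
    refine (ae_restrict_iff' hS).2 (Filter.Eventually.of_forall fun x hx => le_of_lt hx)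
  have hge : 0 ≤ ∫ x in S, h' x * (g x - v₀ x) ∂μ :=
    integral_nonneg_of_ae hnonneg
  have heq0 : ∫ x in S, h' x * (g x - v₀ x) ∂μ = 0 := le_antisymm key3 hge
  have hzero : (fun x => h' x * (g x - v₀ x)) =ᵐ[μ.restrict S] 0 :=
    (integral_eq_zero_iff_of_nonneg_ae hnonneg (hint'.restrict)).1 heq0
  -- hence μ S = 0
  have hμS : μ S = 0 := by
    have h1 : μ.restrict S {x | h' x * (g x - v₀ x) ≠ 0} = 0 := by
      simpa [Filter.EventuallyEq, ae_iff] using hzero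
    have h2 : S ⊆ {x | h' x * (g x - v₀ x) ≠ 0} := fun x hx => ne_of_gt hx
    have h3 : μ.restrict S S ≤ μ.restrict S {x | h' x * (g x - v₀ x) ≠ 0} :=
      measure_mono h2
    rw [h1] at h3
    have h4 : μ.restrict S S = μ S := by rw [Measure.restrict_apply hS, Set.inter_self]
    rw [h4] at h3
    exact le_antisymm h3 zero_le
  have h'_concl : ∀ᵐ x ∂μ, h' x * (g x - v₀ x) ≤ 0 := by
    have : ∀ᵐ x ∂μ, x ∉ S := by
      rw [ae_iff]
      simpa using hμS
    filter_upwards [this] with x hx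
    simpa [hSdef, not_lt] using hx
  filter_upwards [h'_concl, h_ae] with x hx hax
  rw [hax]; exact hx

/-- Localization step in the proof of the maximum principle (Corollary 5.1): if the
variational inequality `∫ h (v - v₊) dμ ≤ 0` holds for every measurable control `v` with
`α ≤ v ≤ β` a.e., then a.e. `h x (c - v₊ x) ≤ 0` for every `c ∈ [α x, β x]`. -/
theorem variational_inequality_localization
    {X : Type*} [MeasurableSpace X] (μ : Measure X) [SigmaFinite μ]
    (h α β v₀ : X → ℝ)
    (hh : MemLp h 2 μ)
    (hα_meas : Measurable α) (hβ_meas : Measurable β) (hv₀_meas : Measurable v₀)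
    (hα : MemLp α 2 μ) (hβ : MemLp β 2 μ)
    (hv₀ : ∀ᵐ x ∂μ, α x ≤ v₀ x ∧ v₀ x ≤ β x)
    (hvar : ∀ v : X → ℝ, Measurable v → (∀ᵐ x ∂μ, α x ≤ v x ∧ v x ≤ β x) →
      ∫ x, h x * (v x - v₀ x) ∂μ ≤ 0) :
    ∀ᵐ x ∂μ, ∀ c : ℝ, α x ≤ c → c ≤ β x → h x * (c - v₀ x) ≤ 0 := by
  -- v₀ is in L²
  have hv₀mem : MemLp v₀ 2 μ := by
    refine (hα.norm.add hβ.norm).mono hv₀_meas.aestronglyMeasurable ?_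
    filter_upwards [hv₀] with x hx
    have : |v₀ x| ≤ |α x| + |β x| := by
      rw [abs_le]
      constructor
      · nlinarith [abs_nonneg (α x), abs_nonneg (β x), neg_abs_le (α x), le_abs_self (β x), hx.1, hx.2]
      · nlinarith [abs_nonneg (α x), abs_nonneg (β x), neg_abs_le (α x), le_abs_self (β x), hx.1, hx.2]
    simpa [Real.norm_eq_abs, abs_of_nonneg (by positivity : (0:ℝ) ≤ |α x| + |β x|)] using this
  have hαβ : ∀ᵐ x ∂μ, α x ≤ β x := hv₀.mono fun x hx => hx.1.trans hx.2
  have hA : ∀ᵐ x ∂μ, h x * (α x - v₀ x) ≤ 0 :=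
    variational_inequality_localization_aux μ h α β v₀ hh hv₀_meas hv₀mem hv₀ hvar
      α hα_meas hα (hαβ.mono fun x hx => ⟨le_refl _, hx⟩)
  have hB : ∀ᵐ x ∂μ, h x * (β x - v₀ x) ≤ 0 :=
    variational_inequality_localization_aux μ h α β v₀ hh hv₀_meas hv₀mem hv₀ hvar
      β hβ_meas hβ (hαβ.mono fun x hx => ⟨hx, le_refl _⟩)
  filter_upwards [hA, hB, hv₀] with x h1 h2 hx c hc1 hc2
  rcases lt_trichotomy (h x) 0 with hsgn | hsgn | hsgn
  · -- h x < 0 : then α x - v₀ x ≥ 0, so c - v₀ x ≥ 0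
    have : 0 ≤ α x - v₀ x := by nlinarith
    have : 0 ≤ c - v₀ x := by linarith
    nlinarith
  · simp [hsgn]
  · -- h x > 0 : then β x - v₀ x ≤ 0, so c - v₀ x ≤ 0
    have : β x - v₀ x ≤ 0 := by nlinarith
    have : c - v₀ x ≤ 0 := by linarith
    nlinarith
end

section
/- Let (X, μ) be a σ-finite measure space, let h ∈ L²(μ), and let α, β, v₊ : X → ℝ be measurable functions with α, β ∈ L²(μ) and α(x) ≤ v₊(x) ≤ β(x) for μ-almost every x. Suppose that for every measurable function v : X → ℝ with α(x) ≤ v(x) ≤ β(x) μ-almost everywhere one has ∫_X h · (v − v₊) dμ ≤ 0. Then for μ-almost every x ∈ X, h(x) · v₊(x) = sup { h(x) · c : c ∈ ℝ, α(x) ≤ c ≤ β(x) }. -/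
open MeasureTheory

/-- Maximum condition of Corollary 5.1 (Pontryagin's maximum principle, special case):
the optimal control `v₊` maximizes the pointwise Hamiltonian `c ↦ h x * c` over the
control interval `[α x, β x]` at almost every point. -/
theorem pontryagin_maximum_condition
    {X : Type*} [MeasurableSpace X] (μ : Measure X) [SigmaFinite μ]
    (h α β v₀ : X → ℝ)
    (hh : MemLp h 2 μ)
    (hα_meas : Measurable α) (hβ_meas : Measurable β) (hv₀_meas : Measurable v₀)
    (hα : MemLp α 2 μ) (hβ : MemLp β 2 μ)
    (hv₀ : ∀ᵐ x ∂μ, α x ≤ v₀ x ∧ v₀ x ≤ β x)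
    (hvar : ∀ v : X → ℝ, Measurable v → (∀ᵐ x ∂μ, α x ≤ v x ∧ v x ≤ β x) →
      ∫ x, h x * (v x - v₀ x) ∂μ ≤ 0) :
    ∀ᵐ x ∂μ, h x * v₀ x = sSup {y : ℝ | ∃ c : ℝ, α x ≤ c ∧ c ≤ β x ∧ y = h x * c} := by
  -- measurable representative of h
  obtain ⟨h', h'_meas, hhh'⟩ := hh.aestronglyMeasurable.aemeasurable
  -- the candidate maximizer
  set v : X → ℝ := fun x => if 0 ≤ h' x then β x else α x with hv_def
  have hv_meas : Measurable v := Measurable.ite (measurableSet_le measurable_const h'_meas)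
    hβ_meas hα_meas
  have hαβ : ∀ᵐ x ∂μ, α x ≤ β x := by
    filter_upwards [hv₀] with x ⟨h1, h2⟩; exact h1.trans h2
  have hv_bd : ∀ᵐ x ∂μ, α x ≤ v x ∧ v x ≤ β x := by
    filter_upwards [hαβ] with x hx
    by_cases hc : 0 ≤ h' x <;> simp [hv_def, hc, hx]
  -- v ∈ L²
  have hv_mem : MemLp v 2 μ := by
    have habs : MemLp (fun x => |α x| + |β x|) 2 μ := (hα.abs).add (hβ.abs)
    refine habs.mono hv_meas.aestronglyMeasurable ?_
    refine Filter.Eventually.of_forall fun x => ?_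
    by_cases hc : 0 ≤ h' x <;>
      simp only [hv_def, hc, if_true, if_false] <;>
      [calc ‖β x‖ = |β x| := rfl
        _ ≤ |α x| + |β x| := le_add_of_nonneg_left (abs_nonneg _)
        _ ≤ ‖|α x| + |β x|‖ := le_abs_self _;
       calc ‖α x‖ = |α x| := rfl
        _ ≤ |α x| + |β x| := le_add_of_nonneg_right (abs_nonneg _)
        _ ≤ ‖|α x| + |β x|‖ := le_abs_self _]
  have hv₀_mem : MemLp v₀ 2 μ := by
    have habs : MemLp (fun x => |α x| + |β x|) 2 μ := (hα.abs).add (hβ.abs)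
    refine habs.mono hv₀_meas.aestronglyMeasurable ?_
    filter_upwards [hv₀] with x ⟨h1, h2⟩
    have : |v₀ x| ≤ |α x| + |β x| := by
      rw [abs_le]
      constructor
      · have := neg_abs_le (α x); linarith [abs_nonneg (β x)]
      · have := le_abs_self (β x); linarith [abs_nonneg (α x)]
    calc ‖v₀ x‖ = |v₀ x| := rfl
      _ ≤ |α x| + |β x| := this
      _ ≤ ‖|α x| + |β x|‖ := le_abs_self _
  -- integrability of the integrand
  have hInt : Integrable (fun x => h x * (v x - v₀ x)) μ := by
    have hsub : MemLp (fun x => v x - v₀ x) 2 μ := hv_mem.sub hv₀_mem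
    have := hsub.smul (φ := h) hh (p := 2) (q := 2) (r := 1)
    exact memLp_one_iff_integrable.mp this
  -- the integrand is a.e. nonnegative
  have hnonneg : ∀ᵐ x ∂μ, 0 ≤ h x * (v x - v₀ x) := by
    filter_upwards [hv₀, hhh'] with x ⟨h1, h2⟩ hx
    by_cases hc : 0 ≤ h' x
    · have hvx : v x = β x := by simp [hv_def, hc]
      rw [hvx]
      have : 0 ≤ h x := hx ▸ hc
      exact mul_nonneg this (by linarith)
    · have hvx : v x = α x := by simp [hv_def, hc]
      rw [hvx]
      push_neg at hc
      have : h x < 0 := hx ▸ hc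
      nlinarith
  have hle : ∫ x, h x * (v x - v₀ x) ∂μ ≤ 0 := hvar v hv_meas hv_bd
  have hge : 0 ≤ ∫ x, h x * (v x - v₀ x) ∂μ := integral_nonneg_of_ae hnonneg
  have hzero : ∫ x, h x * (v x - v₀ x) ∂μ = 0 := le_antisymm hle hge
  have hae : ∀ᵐ x ∂μ, h x * (v x - v₀ x) = 0 := by
    have := (integral_eq_zero_iff_of_nonneg_ae hnonneg hInt).mp hzero
    filter_upwards [this] with x hx
    simpa using hx
  -- conclude pointwise
  filter_upwards [hv₀, hhh', hae] with x ⟨h1, h2⟩ hx heq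
  have hαβx : α x ≤ β x := h1.trans h2
  have hvv : h x * v₀ x = h x * v x := by linarith [heq, mul_sub (h x) (v x) (v₀ x)]
  rw [hvv]
  have hGreatest : IsGreatest {y : ℝ | ∃ c : ℝ, α x ≤ c ∧ c ≤ β x ∧ y = h x * c}
      (h x * v x) := by
    constructor
    · by_cases hc : 0 ≤ h' x
      · exact ⟨β x, hαβx, le_refl _, by simp [hv_def, hc]⟩
      · exact ⟨α x, le_refl _, hαβx, by simp [hv_def, hc]⟩
    · rintro y ⟨c, hc1, hc2, rfl⟩
      by_cases hc : 0 ≤ h' x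
      · have hvx : v x = β x := by simp [hv_def, hc]
        rw [hvx]
        exact mul_le_mul_of_nonneg_left hc2 (hx ▸ hc)
      · have hvx : v x = α x := by simp [hv_def, hc]
        rw [hvx]
        push_neg at hc
        have : h x ≤ 0 := (hx ▸ hc).le
        exact mul_le_mul_of_nonpos_left hc1 this
  exact (hGreatest.csSup_eq).symm
end
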